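/- arXiv:2312.16819 — 2 statements merged into one kernel-verified Lean document; each statement's English description precedes it below -/
import Mathlib

section
/- Let U ⊆ ℝⁿ be open, let f : U → ℝ be C², let c ∈ U with ∇f(c) = 0, and suppose the closed ball of radius ε > 0 around c is contained in U. For 0 < r ≤ ε define m(r) = min{f(x) : ‖x − c‖ = r}. Then m(r) = f(c) + (μ₁/2) r² + o(r²) as r → 0⁺, where μ₁ is the smallest eigenvalue of the Hessian ∇²f(c); that is, (m(r) − f(c) − (μ₁/2) r²)/r² → 0 as r → 0⁺. -/
/-!
Taylor's formula to second order at the critical point gives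
`f x = f c + ⟪H (x - c), x - c⟫ / 2 + o(‖x - c‖²)`, where the Hessian `H` is symmetric because
`f` is `C²`. Since the infimum of the Rayleigh quotient of `H` is an eigenvalue, the quadratic
term is at least `μ₁ r² / 2` on the sphere of radius `r`, and it equals `μ₁ r² / 2` at `r` times a
unit eigenvector for `μ₁`. Hence `m r` is squeezed between `f c + μ₁ r² / 2 ± o(r²)`.
-/

open Filter Asymptotics Metric InnerProductSpace Topology

section Taylor

variable {E F : Type*} [NormedAddCommGroup E] [NormedSpace ℝ E]
  [NormedAddCommGroup F] [NormedSpace ℝ F]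

theorem ContDiffAt.differentiableAt_fderiv {f : E → F} {x : E} (hf : ContDiffAt ℝ 2 f x) :
    DifferentiableAt ℝ (fderiv ℝ f) x :=
  (hf.fderiv_right (m := 1) le_rfl).differentiableAt one_ne_zero

theorem isLittleO_sub_sq_of_isLittleO_fderiv {g : E → F} {g' : E → E →L[ℝ] F} {x : E}
    (hg : ∀ᶠ y in 𝓝 x, HasFDerivAt g (g' y) y) (hg' : g' =o[𝓝 x] fun y => y - x) :
    (fun y => g y - g x) =o[𝓝 x] fun y => ‖y - x‖ ^ 2 := by
  refine isLittleO_iff.2 fun δ hδ => ?_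
  obtain ⟨ρ, hρ, hball⟩ := Metric.eventually_nhds_iff_ball.1 (hg.and (hg'.def hδ))
  filter_upwards [ball_mem_nhds x hρ] with y hy
  have hsub : closedBall x ‖y - x‖ ⊆ ball x ρ :=
    closedBall_subset_ball (by rwa [← dist_eq_norm, ← mem_ball])
  have hmvt := (convex_closedBall x ‖y - x‖).norm_image_sub_le_of_norm_hasFDerivWithin_le
    (fun z hz => (hball z (hsub hz)).1.hasFDerivWithinAt)
    (fun z hz => ((hball z (hsub hz)).2).trans
      (mul_le_mul_of_nonneg_left (by rwa [← dist_eq_norm]) hδ.le))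
    (mem_closedBall_self (norm_nonneg _)) (by rw [mem_closedBall, dist_eq_norm])
  calc ‖g y - g x‖ ≤ δ * ‖y - x‖ * ‖y - x‖ := hmvt
    _ = δ * ‖‖y - x‖ ^ 2‖ := by rw [norm_pow, norm_norm]; ring

theorem ContDiffAt.isLittleO_sub_taylor_two {f : E → F} {x : E} (hf : ContDiffAt ℝ 2 f x) :
    (fun y => f y - f x - fderiv ℝ f x (y - x) -
        (2 : ℝ)⁻¹ • fderiv ℝ (fderiv ℝ f) x (y - x) (y - x)) =o[𝓝 x]
      fun y => ‖y - x‖ ^ 2 := by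
  set D := fderiv ℝ (fderiv ℝ f) x
  have hsymm : IsSymmSndFDerivAt ℝ f x :=
    hf.isSymmSndFDerivAt (by simp [minSmoothness_of_isRCLikeNormedField])
  have hD : HasFDerivAt (fderiv ℝ f) D x := hf.differentiableAt_fderiv.hasFDerivAt
  have hdiff : ∀ᶠ y in 𝓝 x, DifferentiableAt ℝ f y :=
    hf.eventually (by simp) |>.mono fun y hy => hy.differentiableAt two_ne_zero
  have hderiv : ∀ᶠ y in 𝓝 x, HasFDerivAt
      (fun z => f z - fderiv ℝ f x (z - x) - (2 : ℝ)⁻¹ • D (z - x) (z - x))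
      (fderiv ℝ f y - fderiv ℝ f x - D (y - x)) y := by
    filter_upwards [hdiff] with y hy
    have hlin : HasFDerivAt (fun z => z - x) (ContinuousLinearMap.id ℝ E) y :=
      (hasFDerivAt_id y).sub_const x
    have hquad := (D.hasFDerivAt.comp y hlin).clm_apply hlin
    refine ((hy.hasFDerivAt.sub ((fderiv ℝ f x).hasFDerivAt.comp y hlin)).sub
      (hquad.const_smul (2 : ℝ)⁻¹)).congr_fderiv ?_
    ext u
    have hDsymm : D u (y - x) = D (y - x) u := hsymm u (y - x)
    simp only [sub_apply, smul_apply, add_apply, ContinuousLinearMap.comp_apply,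
      ContinuousLinearMap.id_apply, ContinuousLinearMap.flip_apply, Function.comp_apply, hDsymm]
    module
  refine (isLittleO_sub_sq_of_isLittleO_fderiv hderiv hD.isLittleO).congr_left fun y => ?_
  simp only [sub_self, map_zero, smul_zero, sub_zero]
  abel

end Taylor

section Gradient

variable {E : Type*} [NormedAddCommGroup E] [InnerProductSpace ℝ E] [CompleteSpace E]
  {f : E → ℝ} {x : E}

theorem hasFDerivAt_gradient (hf : DifferentiableAt ℝ (fderiv ℝ f) x) :
    HasFDerivAt (gradient f)
      ((toDual ℝ E).symm.toLinearIsometry.toContinuousLinearMap.comp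
        (fderiv ℝ (fderiv ℝ f) x)) x :=
  (toDual ℝ E).symm.toLinearIsometry.toContinuousLinearMap.hasFDerivAt.comp x hf.hasFDerivAt

theorem inner_fderiv_gradient_apply (hf : DifferentiableAt ℝ (fderiv ℝ f) x) (u w : E) :
    ⟪fderiv ℝ (gradient f) x u, w⟫_ℝ = fderiv ℝ (fderiv ℝ f) x u w := by
  rw [(hasFDerivAt_gradient hf).fderiv]
  exact toDual_symm_apply

theorem ContDiffAt.isSymmetric_fderiv_gradient (hf : ContDiffAt ℝ 2 f x) :
    (fderiv ℝ (gradient f) x : E →ₗ[ℝ] E).IsSymmetric := by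
  intro u w
  rw [ContinuousLinearMap.coe_coe, inner_fderiv_gradient_apply hf.differentiableAt_fderiv,
    real_inner_comm, inner_fderiv_gradient_apply hf.differentiableAt_fderiv]
  exact hf.isSymmSndFDerivAt (by simp [minSmoothness_of_isRCLikeNormedField]) u w

end Gradient

theorem LinearMap.IsSymmetric.mul_norm_sq_le_inner_self {E : Type*} [NormedAddCommGroup E]
    [InnerProductSpace ℝ E] [FiniteDimensional ℝ E] {T : E →ₗ[ℝ] E} (hT : T.IsSymmetric)
    {μ₁ : ℝ} (hμ₁ : ∀ μ, Module.End.HasEigenvalue T μ → μ₁ ≤ μ) (x : E) :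
    μ₁ * ‖x‖ ^ 2 ≤ ⟪T x, x⟫_ℝ := by
  rcases eq_or_ne x 0 with rfl | hx
  · simp
  have : Nontrivial E := ⟨⟨x, 0, hx⟩⟩
  let T' := LinearMap.toContinuousLinearMap T
  have hbdd : BddBelow (Set.range fun y : {y : E // y ≠ 0} => T'.rayleighQuotient y) :=
    ⟨-‖T'‖, by
      rintro _ ⟨y, rfl⟩
      exact neg_le_of_abs_le (T'.rayleighQuotient_le_norm y)⟩
  have hμ₁_le := hμ₁ _ hT.hasEigenvalue_iInf_of_finiteDimensional
  have hle := ciInf_le hbdd ⟨x, hx⟩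
  simp only [ContinuousLinearMap.rayleighQuotient, ContinuousLinearMap.reApplyInnerSelf_apply,
    T', LinearMap.coe_toContinuousLinearMap', RCLike.re_to_real] at hle hμ₁_le
  exact (le_div_iff₀ (by positivity)).1 (hμ₁_le.trans hle)

theorem Filter.Eventually.eventually_forall_norm_sub_eq {E : Type*} [SeminormedAddCommGroup E]
    {P : E → Prop} {c : E} (h : ∀ᶠ x in 𝓝 c, P x) :
    ∀ᶠ r in 𝓝 (0 : ℝ), ∀ x, ‖x - c‖ = r → P x := by
  obtain ⟨ρ, hρ, hball⟩ := Metric.eventually_nhds_iff_ball.1 h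
  filter_upwards [eventually_lt_nhds hρ] with r hr x hx
  exact hball x (by rwa [mem_ball, dist_eq_norm, hx])

theorem abs_sphere_min_sub_le {E : Type*} [NormedAddCommGroup E] [InnerProductSpace ℝ E]
    {f : E → ℝ} {T : E →L[ℝ] E} {c v : E} {r μ₁ η M : ℝ} (hr : 0 ≤ r)
    (hlow : ∀ h, μ₁ * ‖h‖ ^ 2 ≤ ⟪T h, h⟫_ℝ) (hv : v ≠ 0) (hTv : T v = μ₁ • v)
    (hf : ∀ x, ‖x - c‖ = r → |f x - f c - ⟪T (x - c), x - c⟫_ℝ / 2| ≤ η)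
    (hM : ∃ x, ‖x - c‖ = r ∧ f x = M) (hMle : ∀ x, ‖x - c‖ = r → M ≤ f x) :
    |M - f c - μ₁ / 2 * r ^ 2| ≤ η := by
  obtain ⟨x₀, hx₀, rfl⟩ := hM
  have hlower : f c + μ₁ / 2 * r ^ 2 - η ≤ f x₀ := by
    have := hlow (x₀ - c)
    rw [hx₀] at this
    linarith [(abs_le.1 (hf x₀ hx₀)).1]
  set w := (r / ‖v‖) • v
  have hw : ‖w‖ = r := by
    rw [norm_smul, Real.norm_of_nonneg (by positivity), div_mul_cancel₀ _ (norm_ne_zero_iff.2 hv)]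
  have hTw : ⟪T w, w⟫_ℝ = μ₁ * r ^ 2 := by
    rw [map_smul, hTv, smul_comm, real_inner_smul_left, real_inner_self_eq_norm_sq, hw]
  have hupper : f x₀ ≤ f c + μ₁ / 2 * r ^ 2 + η := by
    have hcw : ‖c + w - c‖ = r := by rw [add_sub_cancel_left, hw]
    have := (abs_le.1 (hf (c + w) hcw)).2
    rw [add_sub_cancel_left, hTw] at this
    linarith [hMle (c + w) hcw]
  exact abs_le.2 ⟨by linarith, by linarith⟩

theorem min_on_sphere_asymptotics_general {n : ℕ}
    (U : Set (EuclideanSpace ℝ (Fin n))) (hU : IsOpen U)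
    (f : EuclideanSpace ℝ (Fin n) → ℝ) (hf : ContDiffOn ℝ 2 f U)
    (c : EuclideanSpace ℝ (Fin n)) (hc : c ∈ U) (hcrit : gradient f c = 0)
    (ε : ℝ) (hε : 0 < ε)
    (m : ℝ → ℝ)
    (hm : ∀ r ∈ Set.Ioc (0 : ℝ) ε,
      (∃ x : EuclideanSpace ℝ (Fin n), ‖x - c‖ = r ∧ f x = m r) ∧
      ∀ x : EuclideanSpace ℝ (Fin n), ‖x - c‖ = r → m r ≤ f x)
    (μ₁ : ℝ)
    (hμeig : ∃ v : EuclideanSpace ℝ (Fin n), v ≠ 0 ∧ fderiv ℝ (gradient f) c v = μ₁ • v)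
    (hμmin : ∀ (μ : ℝ) (w : EuclideanSpace ℝ (Fin n)), w ≠ 0 →
      fderiv ℝ (gradient f) c w = μ • w → μ₁ ≤ μ) :
    Tendsto (fun r => (m r - f c - μ₁ / 2 * r ^ 2) / r ^ 2)
      (nhdsWithin 0 (Set.Ioi 0)) (nhds 0) := by
  obtain ⟨v, hv, hTv⟩ := hμeig
  set T := fderiv ℝ (gradient f) c
  have hfc : ContDiffAt ℝ 2 f c := hf.contDiffAt (hU.mem_nhds hc)
  have hlow : ∀ h, μ₁ * ‖h‖ ^ 2 ≤ ⟪T h, h⟫_ℝ :=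
    hfc.isSymmetric_fderiv_gradient.mul_norm_sq_le_inner_self fun μ hμ =>
      let ⟨w, hw⟩ := hμ.exists_hasEigenvector
      hμmin μ w hw.2 hw.apply_eq_smul
  have htaylor : (fun x => f x - f c - ⟪T (x - c), x - c⟫_ℝ / 2) =o[𝓝 c]
      fun x => ‖x - c‖ ^ 2 := by
    refine hfc.isLittleO_sub_taylor_two.congr_left fun x => ?_
    rw [← toDual_gradient, hcrit, map_zero,
      ← inner_fderiv_gradient_apply hfc.differentiableAt_fderiv]
    simp only [zero_apply, sub_zero, smul_eq_mul]
    ring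
  refine (isLittleO_iff.2 fun δ hδ => ?_).tendsto_div_nhds_zero
  filter_upwards [(htaylor.def hδ).eventually_forall_norm_sub_eq.filter_mono nhdsWithin_le_nhds,
    Ioc_mem_nhdsGT hε] with r hr hrε
  rw [Real.norm_eq_abs, norm_pow, Real.norm_eq_abs, sq_abs]
  refine abs_sphere_min_sub_le hrε.1.le hlow hv hTv (fun x hx => ?_) (hm r hrε).1 (hm r hrε).2
  simpa [hx] using hr x hx

/-- For a `C²` function `f` with critical point `c`, the minimum `m(r)`
of `f` over the sphere of radius `r` around `c` satisfies
`m(r) = f(c) + (μ₁/2) r² + o(r²)` as `r → 0⁺`, where `μ₁` is the smallest eigenvalue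
of the Hessian `∇²f(c)` (realized as the derivative of the gradient at `c`). -/
theorem min_on_sphere_asymptotics {n : ℕ}
    (U : Set (EuclideanSpace ℝ (Fin n))) (hU : IsOpen U)
    (f : EuclideanSpace ℝ (Fin n) → ℝ) (hf : ContDiffOn ℝ 2 f U)
    (c : EuclideanSpace ℝ (Fin n)) (hc : c ∈ U) (hcrit : gradient f c = 0)
    (ε : ℝ) (hε : 0 < ε) (hball : Metric.closedBall c ε ⊆ U)
    (m : ℝ → ℝ)
    (hm : ∀ r ∈ Set.Ioc (0 : ℝ) ε,
      (∃ x : EuclideanSpace ℝ (Fin n), ‖x - c‖ = r ∧ f x = m r) ∧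
      ∀ x : EuclideanSpace ℝ (Fin n), ‖x - c‖ = r → m r ≤ f x)
    (μ₁ : ℝ)
    (hμeig : ∃ v : EuclideanSpace ℝ (Fin n), v ≠ 0 ∧ fderiv ℝ (gradient f) c v = μ₁ • v)
    (hμmin : ∀ (μ : ℝ) (w : EuclideanSpace ℝ (Fin n)), w ≠ 0 →
      fderiv ℝ (gradient f) c w = μ • w → μ₁ ≤ μ) :
    Tendsto (fun r => (m r - f c - μ₁ / 2 * r ^ 2) / r ^ 2)
      (nhdsWithin 0 (Set.Ioi 0)) (nhds 0) :=
  min_on_sphere_asymptotics_general U hU f hf c hc hcrit ε hε m hm μ₁ hμeig hμmin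
end

section
/- Let d ≥ 4 and let 𝔸_{d,2} be the space of skew-symmetric real d×d matrices with all row sums zero. If T : 𝔸_{d,2} → 𝔸_{d,2} is a linear map satisfying T(P_σ W P_σᵀ) = P_σ T(W) P_σᵀ for all σ ∈ S_d and all W ∈ 𝔸_{d,2}, then T is a scalar multiple of the identity. -/
/-! The matrices `X(i,j,k) = E_ij + E_jk + E_ki - E_ji - E_kj - E_ik` of oriented 3-cycles lie
in `𝔸_{d,2}` and span it, since `∑_{q,r} W_qr X(p,q,r) = 2 W` for every `W ∈ 𝔸_{d,2}`.
By equivariance, `A = T X(i,j,k)` is multiplied by `±1` under every permutation that multiplies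
`X(i,j,k)` by `±1`: it is invariant under the rotation of `(i,j,k)` and under transpositions
disjoint from `{i,j,k}`, and changes sign under `(i j)`. Together with skew-symmetry this forces
`A = c X(i,j,k)`. As `S_d` is transitive on triples of distinct indices, `T X = c X` for every
3-cycle matrix, so `T = c • id`. -/

open Matrix

/-- The permutation matrix of `σ`. -/
def permMat {d : ℕ} (σ : Equiv.Perm (Fin d)) : Matrix (Fin d) (Fin d) ℝ :=
  Matrix.of fun i j => if σ j = i then (1 : ℝ) else 0

/-- `𝔸_{d,2}`: skew-symmetric matrices with all row sums zero. -/
def Ad2 (d : ℕ) : Submodule ℝ (Matrix (Fin d) (Fin d) ℝ) where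
  carrier := {A | Aᵀ = -A ∧ ∀ i, ∑ j, A i j = 0}
  zero_mem' := ⟨by simp, by simp⟩
  add_mem' := by
    rintro a b ⟨ha1, ha2⟩ ⟨hb1, hb2⟩
    refine ⟨by rw [Matrix.transpose_add, ha1, hb1, neg_add], fun i => ?_⟩
    simp [Matrix.add_apply, Finset.sum_add_distrib, ha2 i, hb2 i]
  smul_mem' := by
    rintro c a ⟨ha1, ha2⟩
    refine ⟨by rw [Matrix.transpose_smul, ha1, smul_neg], fun i => ?_⟩
    simp [Matrix.smul_apply, ← Finset.mul_sum, ha2 i]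

open Equiv

section

variable {α : Type*} [DecidableEq α]

def cycleMatrix (i j k : α) : Matrix α α ℝ :=
  single i j 1 + single j k 1 + single k i 1 - single j i 1 - single k j 1 - single i k 1

variable (i j k : α)

lemma cycleMatrix_rotate : cycleMatrix j k i = cycleMatrix i j k := by
  unfold cycleMatrix; abel

lemma cycleMatrix_swap : cycleMatrix j i k = -cycleMatrix i j k := by
  unfold cycleMatrix; abel

variable {i j k} in
lemma cycleMatrix_eq_zero (h : i = j ∨ i = k ∨ j = k) : cycleMatrix i j k = 0 := by
  rcases h with rfl | rfl | rfl <;> (unfold cycleMatrix; abel)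

variable {i j k} in
lemma cycleMatrix_apply_left_mid (hij : i ≠ j) (hik : i ≠ k) (hjk : j ≠ k) :
    cycleMatrix i j k i j = 1 := by
  simp [cycleMatrix, hij, hij.symm, hik.symm, hjk.symm]

lemma transpose_cycleMatrix : (cycleMatrix i j k)ᵀ = -cycleMatrix i j k := by
  simp only [cycleMatrix, transpose_sub, transpose_add, transpose_single]; abel

lemma cycleMatrix_submatrix (σ : Perm α) :
    (cycleMatrix i j k).submatrix σ σ = cycleMatrix (σ.symm i) (σ.symm j) (σ.symm k) := by
  ext a b; simp [cycleMatrix, single_apply, symm_apply_eq]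

lemma Matrix.sum_single_apply [Fintype α] (a : α) (c : ℝ) :
    ∑ b, single i j c a b = if i = a then c else 0 := by
  simp [single_apply, ite_and]

lemma sum_cycleMatrix_apply [Fintype α] (a : α) : ∑ b, cycleMatrix i j k a b = 0 := by
  simp only [cycleMatrix, Matrix.sub_apply, Matrix.add_apply, Finset.sum_add_distrib,
    Finset.sum_sub_distrib, sum_single_apply]
  split_ifs <;> ring

lemma sum_smul_cycleMatrix [Fintype α] {W : Matrix α α ℝ} (hskew : Wᵀ = -W)
    (hrow : ∀ i, ∑ j, W i j = 0) (p : α) :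
    ∑ q, ∑ r, W q r • cycleMatrix p q r = (2 : ℝ) • W := by
  have hneg (a b : α) : W b a = -W a b := congr_fun₂ hskew a b
  have hcol (j : α) : ∑ i, W i j = 0 := by
    rw [← neg_eq_zero, ← Finset.sum_neg_distrib, ← hrow j]
    exact Finset.sum_congr rfl fun i _ => (hneg i j).symm
  -- only the `E_qr - E_rq` part survives: the other four terms sum rows or columns of `W`
  ext a b
  simp [cycleMatrix, Matrix.sum_apply, single_apply, mul_sub, mul_add, Finset.sum_add_distrib,
    Finset.sum_sub_distrib, ite_and, hrow, hcol, hneg a b, two_mul]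

end

section

variable {α : Type*} {i j k : α}

lemma exists_perm_cycle [DecidableEq α] (hij : i ≠ j) (hik : i ≠ k) (hjk : j ≠ k) :
    ∃ ρ : Perm α, ρ i = j ∧ ρ j = k ∧ ρ k = i ∧ ∀ b, b ≠ i → b ≠ j → b ≠ k → ρ b = b :=
  ⟨swap i j * swap j k, by simp [swap_apply_of_ne_of_ne, *],
    by simp [swap_apply_of_ne_of_ne hik.symm hjk.symm], by simp,
    fun b hi hj hk => by simp [swap_apply_of_ne_of_ne, *]⟩

lemma exists_perm_apply_eq_of_ne [Finite α] {p q r : α} (hij : i ≠ j) (hik : i ≠ k)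
    (hjk : j ≠ k) (hpq : p ≠ q) (hpr : p ≠ r) (hqr : q ≠ r) :
    ∃ σ : Perm α, σ i = p ∧ σ j = q ∧ σ k = r := by
  obtain ⟨σ, hσ⟩ := Perm.exists_extending_pair ![i, j, k] ![p, q, r]
    (by intro x y; fin_cases x <;> fin_cases y <;> simp [*, Ne.symm])
    (by intro x y; fin_cases x <;> fin_cases y <;> simp [*, Ne.symm])
  exact ⟨σ, hσ 0, hσ 1, hσ 2⟩

end

section

variable {α : Type*}

def TransformsLike (X A : Matrix α α ℝ) : Prop :=
  ∀ (σ : Perm α) (s : ℝ), X.submatrix σ σ = s • X → A.submatrix σ σ = s • A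

namespace TransformsLike

variable {A : Matrix α α ℝ}

lemma apply_apply {X : Matrix α α ℝ} (hA : TransformsLike X A) {σ : Perm α} {s : ℝ}
    (hσ : X.submatrix σ σ = s • X) (a b : α) : A (σ a) (σ b) = s * A a b :=
  congr_fun₂ (hA σ s hσ) a b

variable [DecidableEq α] {i j k : α}

lemma apply_rotate (hA : TransformsLike (cycleMatrix i j k) A) {ρ : Perm α} (hρi : ρ i = j)
    (hρj : ρ j = k) (hρk : ρ k = i) (a b : α) : A (ρ a) (ρ b) = A a b := by
  refine (hA.apply_apply ?_ a b).trans (one_mul _)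
  rw [cycleMatrix_submatrix, ρ.symm_apply_eq.mpr hρk.symm, ρ.symm_apply_eq.mpr hρi.symm,
    ρ.symm_apply_eq.mpr hρj.symm, one_smul, ← cycleMatrix_rotate k i j]

lemma apply_swap (hA : TransformsLike (cycleMatrix i j k) A) (hik : i ≠ k) (hjk : j ≠ k)
    (a b : α) : A (swap i j a) (swap i j b) = -A a b := by
  refine (hA.apply_apply ?_ a b).trans (neg_one_mul _)
  rw [cycleMatrix_submatrix, symm_swap, swap_apply_left, swap_apply_right,
    swap_apply_of_ne_of_ne hik.symm hjk.symm, cycleMatrix_swap, neg_one_smul]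

lemma apply_symm_of_not_mem (hA : TransformsLike (cycleMatrix i j k) A) {a b : α}
    (ha : a ≠ i ∧ a ≠ j ∧ a ≠ k) (hb : b ≠ i ∧ b ≠ j ∧ b ≠ k) : A b a = A a b := by
  have h := hA.apply_apply (σ := swap a b) (s := 1) ?_ a b
  · rwa [swap_apply_left, swap_apply_right, one_mul] at h
  rw [cycleMatrix_submatrix, symm_swap, swap_apply_of_ne_of_ne ha.1.symm hb.1.symm,
    swap_apply_of_ne_of_ne ha.2.1.symm hb.2.1.symm,
    swap_apply_of_ne_of_ne ha.2.2.symm hb.2.2.symm, one_smul]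

lemma eq_zero_of_apply_eq_zero (hA : TransformsLike (cycleMatrix i j k) A) (hij : i ≠ j)
    (hik : i ≠ k) (hjk : j ≠ k) (hskew : Aᵀ = -A) (hAij : A i j = 0) : A = 0 := by
  have hneg (a b : α) : A b a = -A a b := congr_fun₂ hskew a b
  have hdiag (a : α) : A a a = 0 := by linarith [hneg a a]
  obtain ⟨ρ, hρi, hρj, hρk, hρ⟩ := exists_perm_cycle hij hik hjk
  have hAρ := hA.apply_rotate hρi hρj hρk
  have hrow_i (b : α) : A i b = 0 := by
    by_cases hb : b = i ∨ b = j ∨ b = k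
    · rcases hb with rfl | rfl | rfl
      · exact hdiag b
      · exact hAij
      · rw [hneg b i, ← hρj, ← hρk, hAρ, ← hρi, ← hρj, hAρ, hAij, neg_zero]
    · -- the rotation gives `A j b = A i b`, the transposition `(i j)` gives `A j b = -A i b`
      push Not at hb
      have h1 := hAρ i b
      have h2 := hA.apply_swap hik hjk i b
      rw [hρi, hρ b hb.1 hb.2.1 hb.2.2] at h1
      rw [swap_apply_left, swap_apply_of_ne_of_ne hb.1 hb.2.1] at h2
      linarith
  have hrow_j (b : α) : A j b = 0 := by
    obtain ⟨b, rfl⟩ := ρ.surjective b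
    rw [← hρi, hAρ, hrow_i]
  have hrow_k (b : α) : A k b = 0 := by
    obtain ⟨b, rfl⟩ := ρ.surjective b
    rw [← hρj, hAρ, hrow_j]
  have hrow (a b : α) (ha : a = i ∨ a = j ∨ a = k) : A a b = 0 := by
    rcases ha with rfl | rfl | rfl
    exacts [hrow_i b, hrow_j b, hrow_k b]
  ext a b
  rw [Matrix.zero_apply]
  by_cases ha : a = i ∨ a = j ∨ a = k
  · exact hrow a b ha
  by_cases hb : b = i ∨ b = j ∨ b = k
  · rw [← neg_eq_zero, ← hneg, hrow b a hb]
  push Not at ha hb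
  linarith [hneg a b, hA.apply_symm_of_not_mem ha hb]

lemma eq_smul_cycleMatrix (hA : TransformsLike (cycleMatrix i j k) A) (hij : i ≠ j)
    (hik : i ≠ k) (hjk : j ≠ k) (hskew : Aᵀ = -A) :
    A = A i j • cycleMatrix i j k := by
  rw [← sub_eq_zero]
  refine eq_zero_of_apply_eq_zero (fun σ s hσ => ?_) hij hik hjk ?_ ?_
  · ext a b
    have h1 := congr_fun₂ (hA σ s hσ) a b
    have h2 := congr_fun₂ hσ a b
    simp only [submatrix_apply, Matrix.sub_apply, Matrix.smul_apply, smul_eq_mul] at h1 h2 ⊢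
    rw [h1, h2]; ring
  · rw [transpose_sub, transpose_smul, hskew, transpose_cycleMatrix, smul_neg, neg_sub_neg,
      neg_sub]
  · simp [cycleMatrix_apply_left_mid hij hik hjk]

end TransformsLike

end

lemma permMat_mul_mul_transpose {d : ℕ} (σ : Perm (Fin d)) (M : Matrix (Fin d) (Fin d) ℝ) :
    permMat σ * M * (permMat σ)ᵀ = M.submatrix σ.symm σ.symm := by
  ext a b
  simp [permMat, mul_apply, ← eq_symm_apply]

namespace Ad2

variable {d : ℕ}

lemma cycleMatrix_mem (i j k : Fin d) : cycleMatrix i j k ∈ Ad2 d :=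
  ⟨transpose_cycleMatrix i j k, sum_cycleMatrix_apply i j k⟩

def cycle (i j k : Fin d) : Ad2 d := ⟨cycleMatrix i j k, cycleMatrix_mem i j k⟩

lemma span_range_cycle (p : Fin d) :
    Submodule.span ℝ (Set.range fun qr : Fin d × Fin d => cycle p qr.1 qr.2) = ⊤ := by
  refine Submodule.eq_top_iff'.mpr fun W => ?_
  have hW : W = ∑ q, ∑ r, ((W : Matrix (Fin d) (Fin d) ℝ) q r / 2) • cycle p q r := by
    apply Subtype.ext
    have h2W := congrArg ((2 : ℝ)⁻¹ • ·) (sum_smul_cycleMatrix W.2.1 W.2.2 p)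
    simp only [Finset.smul_sum, smul_smul, inv_mul_cancel₀ (two_ne_zero (α := ℝ)), one_smul]
      at h2W
    simpa [cycle, div_eq_inv_mul] using h2W.symm
  rw [hW]
  exact Submodule.sum_mem _ fun q _ => Submodule.sum_mem _ fun r _ =>
    Submodule.smul_mem _ _ (Submodule.subset_span ⟨(q, r), rfl⟩)

lemma eq_smul_of_apply_cycle {T : Ad2 d →ₗ[ℝ] Ad2 d} {c : ℝ} (p : Fin d)
    (h : ∀ q r, T (cycle p q r) = c • cycle p q r) : T = c • LinearMap.id :=
  LinearMap.ext_on_range (span_range_cycle p) fun qr => h qr.1 qr.2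

def IsEquivariant (T : Ad2 d →ₗ[ℝ] Ad2 d) : Prop :=
  ∀ (σ : Perm (Fin d)) (W V : Ad2 d),
    (V : Matrix (Fin d) (Fin d) ℝ) =
        permMat σ * (W : Matrix (Fin d) (Fin d) ℝ) * (permMat σ)ᵀ →
      (T V : Matrix (Fin d) (Fin d) ℝ) =
        permMat σ * (T W : Matrix (Fin d) (Fin d) ℝ) * (permMat σ)ᵀ

namespace IsEquivariant

variable {T : Ad2 d →ₗ[ℝ] Ad2 d}

lemma apply_submatrix (hT : IsEquivariant T) (σ : Perm (Fin d)) {W V : Ad2 d}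
    (h : (V : Matrix (Fin d) (Fin d) ℝ) = (W : Matrix (Fin d) (Fin d) ℝ).submatrix σ σ) :
    (T V : Matrix (Fin d) (Fin d) ℝ) = (T W : Matrix (Fin d) (Fin d) ℝ).submatrix σ σ := by
  simpa [permMat_mul_mul_transpose] using
    hT σ.symm W V (by simpa [permMat_mul_mul_transpose] using h)

lemma transformsLike (hT : IsEquivariant T) (i j k : Fin d) :
    TransformsLike (cycleMatrix i j k) (T (cycle i j k) : Matrix (Fin d) (Fin d) ℝ) :=
  fun σ s hσ => by
    rw [← hT.apply_submatrix σ (V := s • cycle i j k) (by simp [cycle, hσ]), map_smul]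
    rfl

lemma apply_cycle {i j k : Fin d} {c : ℝ} (hT : IsEquivariant T) (hij : i ≠ j) (hik : i ≠ k)
    (hjk : j ≠ k) (hc : T (cycle i j k) = c • cycle i j k) (p q r : Fin d) :
    T (cycle p q r) = c • cycle p q r := by
  by_cases h : p = q ∨ p = r ∨ q = r
  · have h0 : cycle p q r = 0 := Subtype.ext (cycleMatrix_eq_zero h)
    rw [h0, map_zero, smul_zero]
  push Not at h
  obtain ⟨σ, rfl, rfl, rfl⟩ := exists_perm_apply_eq_of_ne hij hik hjk h.1 h.2.1 h.2.2
  apply Subtype.ext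
  rw [hT.apply_submatrix σ.symm (W := cycle i j k) (by simp [cycle, cycleMatrix_submatrix]),
    hc]
  change c • (cycleMatrix i j k).submatrix σ.symm σ.symm = c • cycleMatrix (σ i) (σ j) (σ k)
  rw [cycleMatrix_submatrix, symm_symm]

end IsEquivariant

end Ad2

/-- for `d ≥ 4`, every `S_d`-equivariant linear endomorphism of
`𝔸_{d,2}` (for the diagonal action `W ↦ P_σ W P_σᵀ`) is a scalar multiple of the
identity. -/
theorem equivariant_endomorphism_Ad2_is_scalar (d : ℕ) (hd : 4 ≤ d)
    (T : ↥(Ad2 d) →ₗ[ℝ] ↥(Ad2 d))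
    (hT : ∀ (σ : Equiv.Perm (Fin d)) (W V : ↥(Ad2 d)),
      (V : Matrix (Fin d) (Fin d) ℝ) = permMat σ * (W : Matrix (Fin d) (Fin d) ℝ) * (permMat σ)ᵀ →
      (T V : Matrix (Fin d) (Fin d) ℝ) = permMat σ * (T W : Matrix (Fin d) (Fin d) ℝ) * (permMat σ)ᵀ) :
    ∃ c : ℝ, ∀ W : ↥(Ad2 d), T W = c • W := by
  have hT : Ad2.IsEquivariant T := hT
  let i : Fin d := ⟨0, by omega⟩
  let j : Fin d := ⟨1, by omega⟩
  let k : Fin d := ⟨2, by omega⟩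
  have hij : i ≠ j := by simp [i, j, Fin.ext_iff]
  have hik : i ≠ k := by simp [i, k, Fin.ext_iff]
  have hjk : j ≠ k := by simp [j, k, Fin.ext_iff]
  set A : Matrix (Fin d) (Fin d) ℝ := ↑(T (Ad2.cycle i j k))
  have hA : T (Ad2.cycle i j k) = A i j • Ad2.cycle i j k :=
    Subtype.ext ((hT.transformsLike i j k).eq_smul_cycleMatrix hij hik hjk (T _).2.1)
  refine ⟨A i j, fun W => ?_⟩
  rw [Ad2.eq_smul_of_apply_cycle i (hT.apply_cycle hij hik hjk hA i)]
  rfl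
end
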